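/- arXiv:math/0508590 — 2 statements merged into one kernel-verified Lean document; each statement's English description precedes it below -/
import Mathlib

section
/- Let p, q be integers with p > 1 and q > 1, and let B(p,q) = (−A²−A⁻²)(S_p A^{−q} + S_q A^{−p}) + S_p S_q + A^{−p−q} ∈ ℤ[A, A⁻¹] (the Kauffman bracket of the double twist knot K(p,q)). Then the coefficient of A^{3(p+q)−4} in B(p,q) equals (−1)^{p+q}, and the coefficient of A^n in B(p,q) is 0 for every n > 3(p+q)−4. That is, the highest degree term of ⟨K(p,q)⟩ is (−1)^{p+q}A^{3(p+q)−4}. -/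
open LaurentPolynomial

/-- `Spos p = Σ_{i=1}^p A^(2-i) (-A³)^(p-i)` in `ℤ[A, A⁻¹]`, for `p : ℕ`. -/
noncomputable def Spos (p : ℕ) : LaurentPolynomial ℤ :=
  ∑ i ∈ Finset.Icc 1 p, T (2 - (i : ℤ)) * (-(T 3 : LaurentPolynomial ℤ)) ^ (p - i)

/-- `S p` for `p : ℤ`: for `p ≥ 0` it is `Σ_{i=1}^p A^(2-i) (-A³)^(p-i)`
(which is `0` for `p = 0`), and for `p < 0` it is the image of `S (-p)`
under the ring automorphism `A ↦ A⁻¹`. -/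
noncomputable def S (p : ℤ) : LaurentPolynomial ℤ :=
  if 0 ≤ p then Spos p.toNat else invert (Spos (-p).toNat)

/-- The Kauffman bracket `⟨K(p,q)⟩` of the double twist knot `K(p,q)`:
`(-A² - A⁻²)(S_p A^(-q) + S_q A^(-p)) + S_p S_q + A^(-p-q)`. -/
noncomputable def B (p q : ℤ) : LaurentPolynomial ℤ :=
  (-T 2 - T (-2)) * (S p * T (-q) + S q * T (-p)) + S p * S q + T (-p - q)

-- auxiliary
lemma Spos_apply (p : ℕ) (n : ℤ) :
    (Spos p).coeff n = ∑ i ∈ Finset.Icc 1 p,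
      if 2 - (i : ℤ) + ((p - i : ℕ) : ℤ) * 3 = n then (-1 : ℤ) ^ (p - i) else 0 := by
  unfold Spos
  rw [AddMonoidAlgebra.coeff_sum, Finset.sum_apply']
  refine Finset.sum_congr rfl fun i hi => ?_
  have h1 : (-(T 3 : LaurentPolynomial ℤ)) ^ (p - i)
      = C ((-1 : ℤ) ^ (p - i)) * T (((p - i : ℕ) : ℤ) * 3) := by
    rw [neg_pow, T_pow, map_pow, map_neg, map_one]
  rw [h1, mul_left_comm, ← T_add, ← single_eq_C_mul_T, AddMonoidAlgebra.coeff_single, Finsupp.single_apply]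

lemma bdd_mul {f g : LaurentPolynomial ℤ} {d₁ d₂ : ℤ}
    (hf : ∀ n, d₁ < n → f.coeff n = 0) (hg : ∀ n, d₂ < n → g.coeff n = 0) :
    ∀ n, d₁ + d₂ < n → (f * g).coeff n = 0 := by
  intro n hn
  rw [AddMonoidAlgebra.coeff_mul]
  simp only [Finsupp.sum]
  refine Finset.sum_eq_zero fun a ha => Finset.sum_eq_zero fun a' ha' => ?_
  have h1 : a ≤ d₁ := by
    by_contra h; exact (Finsupp.mem_support_iff.1 ha) (hf a (lt_of_not_ge h))
  have h2 : a' ≤ d₂ := by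
    by_contra h; exact (Finsupp.mem_support_iff.1 ha') (hg a' (lt_of_not_ge h))
  have : a + a' ≠ n := by omega
  simp [this]

lemma mul_apply_top (f g : LaurentPolynomial ℤ) (d₁ d₂ : ℤ)
    (hf : ∀ n, d₁ < n → f.coeff n = 0) (hg : ∀ n, d₂ < n → g.coeff n = 0) :
    (f * g).coeff (d₁ + d₂) = f.coeff d₁ * g.coeff d₂ := by
  classical
  rw [AddMonoidAlgebra.coeff_mul]
  simp only [Finsupp.sum]
  rw [Finset.sum_eq_single d₁]
  · rw [Finset.sum_eq_single d₂]
    · simp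
    · intro a' ha' hne
      have h2 : a' ≤ d₂ := by
        by_contra h; exact (Finsupp.mem_support_iff.1 ha') (hg a' (lt_of_not_ge h))
      have : d₁ + a' ≠ d₁ + d₂ := by omega
      simp [this]
    · intro h
      have : g.coeff d₂ = 0 := Finsupp.notMem_support_iff.1 h
      simp [this]
  · intro a ha hne
    have h1 : a ≤ d₁ := by
      by_contra h; exact (Finsupp.mem_support_iff.1 ha) (hf a (lt_of_not_ge h))
    refine Finset.sum_eq_zero fun a' ha' => ?_
    have h2 : a' ≤ d₂ := by
      by_contra h; exact (Finsupp.mem_support_iff.1 ha') (hg a' (lt_of_not_ge h))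
    have hl : a < d₁ := lt_of_le_of_ne h1 hne
    have : a + a' ≠ d₁ + d₂ := by omega
    simp [this]
  · intro h
    have : f.coeff d₁ = 0 := Finsupp.notMem_support_iff.1 h
    refine Finset.sum_eq_zero fun a' _ => ?_
    simp [this]

lemma Spos_bdd (p : ℕ) : ∀ n : ℤ, 3 * (p : ℤ) - 2 < n → (Spos p).coeff n = 0 := by
  intro n hn
  rw [Spos_apply]
  refine Finset.sum_eq_zero fun i hi => ?_
  rw [Finset.mem_Icc] at hi
  have : ((p - i : ℕ) : ℤ) = (p : ℤ) - i := by omega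
  rw [this, if_neg (by omega)]

lemma Spos_top (p : ℕ) (hp : 1 ≤ p) : (Spos p).coeff (3 * (p : ℤ) - 2) = (-1 : ℤ) ^ (p - 1) := by
  rw [Spos_apply]
  rw [Finset.sum_eq_single 1]
  · have : ((p - 1 : ℕ) : ℤ) = (p : ℤ) - 1 := by omega
    rw [this, if_pos (by push_cast; ring)]
  · intro i hi hne
    rw [Finset.mem_Icc] at hi
    have : ((p - i : ℕ) : ℤ) = (p : ℤ) - i := by omega
    rw [this, if_neg (by omega)]
  · intro h
    exact absurd (Finset.mem_Icc.2 ⟨le_refl 1, hp⟩) h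

lemma S_bdd (p : ℤ) (hp : 1 ≤ p) : ∀ n : ℤ, 3 * p - 2 < n → (S p).coeff n = 0 := by
  intro n hn
  rw [S, if_pos (by omega)]
  exact Spos_bdd p.toNat n (by omega)

lemma S_top (p : ℤ) (hp : 1 ≤ p) : (S p).coeff (3 * p - 2) = (-1 : ℤ) ^ (p.toNat - 1) := by
  rw [S, if_pos (by omega)]
  have : 3 * p - 2 = 3 * (p.toNat : ℤ) - 2 := by omega
  rw [this, Spos_top p.toNat (by omega)]

/-- For `p, q > 1`, the highest degree term of `⟨K(p,q)⟩` is
`(-1)^(p+q) A^(3(p+q)-4)`. -/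
theorem bracket_highest_term (p q : ℤ) (hp : 1 < p) (hq : 1 < q) :
    (B p q).coeff (3 * (p + q) - 4) = (-1) ^ (p + q).toNat ∧
      ∀ n : ℤ, 3 * (p + q) - 4 < n → (B p q).coeff n = 0 := by
  have hSp := S_bdd p (by omega)
  have hSq := S_bdd q (by omega)
  have hT : ∀ m : ℤ, ∀ n : ℤ, m < n → (T m : LaurentPolynomial ℤ).coeff n = 0 := by
    intro m n hmn; rw [T_apply, if_neg (by omega)]
  -- first factor bounded by 2
  have hfac : ∀ n : ℤ, (2:ℤ) < n → (-T 2 - T (-2) : LaurentPolynomial ℤ).coeff n = 0 := by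
    intro n hn
    rw [AddMonoidAlgebra.coeff_sub, AddMonoidAlgebra.coeff_neg, Finsupp.sub_apply, Finsupp.neg_apply, hT 2 n hn, hT (-2) n (by omega)]
    ring
  -- inner sum bounded by 3p+3q-7
  have hinner : ∀ n : ℤ, 3*p + 3*q - 7 < n →
      ((S p * T (-q) + S q * T (-p) : LaurentPolynomial ℤ)).coeff n = 0 := by
    intro n hn
    rw [AddMonoidAlgebra.coeff_add, Finsupp.add_apply,
      bdd_mul hSp (hT (-q)) n (by omega), bdd_mul hSq (hT (-p)) n (by omega)]
    ring
  have hX : ∀ n : ℤ, 3*(p+q) - 5 < n →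
      ((-T 2 - T (-2)) * (S p * T (-q) + S q * T (-p)) : LaurentPolynomial ℤ).coeff n = 0 := by
    intro n hn
    exact bdd_mul hfac hinner n (by omega)
  have hPQ : ∀ n : ℤ, 3*(p+q) - 4 < n → (S p * S q).coeff n = 0 := by
    intro n hn
    exact bdd_mul hSp hSq n (by omega)
  constructor
  · rw [B, AddMonoidAlgebra.coeff_add, AddMonoidAlgebra.coeff_add, Finsupp.add_apply, Finsupp.add_apply, hX _ (by omega),
      hT (-p - q) _ (by omega)]
    have key : (S p * S q).coeff (3 * (p + q) - 4) = (S p).coeff (3*p-2) * (S q).coeff (3*q-2) := by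
      have : 3 * (p + q) - 4 = (3*p-2) + (3*q-2) := by ring
      rw [this]
      exact mul_apply_top _ _ _ _ hSp hSq
    rw [key, S_top p (by omega), S_top q (by omega), ← pow_add]
    have h2 : p.toNat - 1 + (q.toNat - 1) + 2 = (p + q).toNat := by omega
    have : ((-1 : ℤ)) ^ (p + q).toNat = (-1:ℤ) ^ (p.toNat - 1 + (q.toNat - 1)) * (-1)^2 := by
      rw [← pow_add, h2]
    rw [this]; ring
  · intro n hn
    rw [B, AddMonoidAlgebra.coeff_add, AddMonoidAlgebra.coeff_add, Finsupp.add_apply, Finsupp.add_apply, hX _ (by omega), hPQ _ hn,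
      hT (-p - q) _ (by omega)]
    ring
end

section
/- Let p, q be integers with p > 1 and q > 1, and let B(p,q) = (−A²−A⁻²)(S_p A^{−q} + S_q A^{−p}) + S_p S_q + A^{−p−q} ∈ ℤ[A, A⁻¹] (the Kauffman bracket of the double twist knot K(p,q)). Then B(p,q) ≠ 0, the maximum of the support of B(p,q) is 3(p+q)−4, the minimum of the support is −(p+q), and hence the difference between the maximal and minimal exponents of B(p,q) is 4(p+q)−4. (After the substitution A⁴ = t in the normalized bracket, this says the span of the Jones polynomial of K(p,q) is p+q.) -/
open LaurentPolynomial

open Polynomial Finset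

/-- `S_n = A^{2-n} · Σ_{j<n} (-A⁴)^j`. -/
lemma Spos_eq (n : ℕ) :
    Spos n = T (2 - (n:ℤ)) * ∑ j ∈ Finset.range n, (-(T 4 : LaurentPolynomial ℤ))^j := by
  rw [Finset.mul_sum, Spos]
  refine Finset.sum_nbij' (fun i => n - i) (fun j => n - j) ?_ ?_ ?_ ?_ ?_
  · intro i hi; simp only [Finset.mem_Icc] at hi; simp only [Finset.mem_range]; omega
  · intro j hj; simp only [Finset.mem_range] at hj; simp only [Finset.mem_Icc]; omega
  · intro i hi; simp only [Finset.mem_Icc] at hi; omega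
  · intro j hj; simp only [Finset.mem_range] at hj; omega
  · intro i hi
    simp only [Finset.mem_Icc] at hi
    have hic : ((i:ℤ)) = (n:ℤ) - ((n - i : ℕ):ℤ) := by omega
    rw [neg_pow (T 3 : LaurentPolynomial ℤ), neg_pow (T 4 : LaurentPolynomial ℤ), T_pow, T_pow, hic]
    rw [show (2 - ((n:ℤ) - ((n-i:ℕ):ℤ))) = (2 - (n:ℤ)) + ((n-i:ℕ):ℤ) by ring]
    rw [show ((((n-i:ℕ)):ℤ) * 4) = ((n-i:ℕ):ℤ) + ((n-i:ℕ):ℤ)*3 by ring]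
    rw [T_add, T_add]
    ring

/-- The auxiliary integer polynomial `F = X^a + X^b - 1 - X·(Σ_{j<a}X^j)(Σ_{k<b}X^k)`,
so that `B p q = A^{-p-q} · F(-A⁴)`. -/
noncomputable def fpoly (a b : ℕ) : Polynomial ℤ :=
  X ^ a + X ^ b - 1 - X * (∑ j ∈ Finset.range a, X ^ j) * (∑ k ∈ Finset.range b, X ^ k)

lemma B_eq (p q : ℤ) (hp : 0 ≤ p) (hq : 0 ≤ q) :
    B p q = T (-p - q) *
      Polynomial.aeval (-(T 4 : LaurentPolynomial ℤ)) (fpoly p.toNat q.toNat) := by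
  have ha : ((p.toNat : ℤ)) = p := Int.toNat_of_nonneg hp
  have hb : ((q.toNat : ℤ)) = q := Int.toNat_of_nonneg hq
  rw [B, S, S, if_pos hp, if_pos hq, Spos_eq, Spos_eq, ha, hb]
  simp only [fpoly, map_sub, map_add, map_mul, map_pow, map_one, aeval_X, map_sum]
  have h4 : (T 4 : LaurentPolynomial ℤ) = T 2 * T 2 := by
    rw [← T_add]; norm_num
  have h0 : (T (-2) : LaurentPolynomial ℤ) * T 2 = 1 := by
    rw [← T_add]; norm_num [T_zero]
  have h2p : (T (2 - p) : LaurentPolynomial ℤ) = T 2 * T (-p) := T_sub 2 p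
  have h2q : (T (2 - q) : LaurentPolynomial ℤ) = T 2 * T (-q) := T_sub 2 q
  have hpq : (T (-p - q) : LaurentPolynomial ℤ) = T (-p) * T (-q) := T_sub (-p) q
  set u : LaurentPolynomial ℤ := -(T 2 * T 2) with hu
  have hgp := geom_sum_mul u p.toNat
  have hgq := geom_sum_mul u q.toNat
  simp only [h4, h2p, h2q, hpq]
  set gp : LaurentPolynomial ℤ := ∑ j ∈ Finset.range p.toNat, u ^ j with hgp'
  set gq : LaurentPolynomial ℤ := ∑ j ∈ Finset.range q.toNat, u ^ j with hgq'
  linear_combination (T (-p) * T (-q)) * hgp + (T (-p) * T (-q)) * hgq -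
    (T (-p) * T (-q) * (gp + gq)) * h0

lemma coeff_geom (a n : ℕ) :
    (∑ j ∈ Finset.range a, (X:Polynomial ℤ) ^ j).coeff n = if n < a then 1 else 0 := by
  rw [finset_sum_coeff]
  simp only [coeff_X_pow]
  rw [Finset.sum_ite_eq (Finset.range a) n (fun _ => (1:ℤ))]
  simp [Finset.mem_range]

lemma natDegree_f_lt (a b : ℕ) (ha : 2 ≤ a) (hb : 2 ≤ b) :
    (fpoly a b).natDegree < a + b := by
  have hG : (∑ j ∈ Finset.range a, (X:Polynomial ℤ) ^ j).natDegree ≤ a - 1 := by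
    apply Polynomial.natDegree_sum_le_of_forall_le
    intro j hj
    simp only [Finset.mem_range] at hj
    rw [natDegree_X_pow]; omega
  have hH : (∑ j ∈ Finset.range b, (X:Polynomial ℤ) ^ j).natDegree ≤ b - 1 := by
    apply Polynomial.natDegree_sum_le_of_forall_le
    intro j hj
    simp only [Finset.mem_range] at hj
    rw [natDegree_X_pow]; omega
  have h1 : (X * (∑ j ∈ Finset.range a, (X:Polynomial ℤ) ^ j) *
      (∑ k ∈ Finset.range b, (X:Polynomial ℤ) ^ k)).natDegree ≤ a + b - 1 := by
    apply le_trans (natDegree_mul_le)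
    have := natDegree_mul_le (p := (X:Polynomial ℤ))
      (q := ∑ j ∈ Finset.range a, (X:Polynomial ℤ) ^ j)
    rw [natDegree_X] at this
    omega
  have h2 : ((X:Polynomial ℤ) ^ a + X ^ b - 1).natDegree ≤ a + b - 1 := by
    apply le_trans (natDegree_sub_le _ _)
    have := natDegree_add_le ((X:Polynomial ℤ) ^ a) ((X:Polynomial ℤ)^b)
    rw [natDegree_X_pow, natDegree_X_pow] at this
    simp only [natDegree_one]
    omega
  have := natDegree_sub_le ((X:Polynomial ℤ) ^ a + X ^ b - 1)
    (X * (∑ j ∈ Finset.range a, (X:Polynomial ℤ) ^ j) * (∑ k ∈ Finset.range b, X ^ k))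
  rw [fpoly]
  omega

lemma coeff_f_zero (a b : ℕ) (ha : 2 ≤ a) (hb : 2 ≤ b) : (fpoly a b).coeff 0 = -1 := by
  simp only [fpoly, coeff_sub, coeff_add, coeff_X_pow, mul_coeff_zero, coeff_X_zero,
    Polynomial.coeff_one]
  simp
  omega

lemma coeff_f_top (a b : ℕ) (ha : 2 ≤ a) (hb : 2 ≤ b) :
    (fpoly a b).coeff (a + b - 1) = -1 := by
  have key : ((∑ j ∈ Finset.range a, (X:Polynomial ℤ) ^ j) *
      (∑ k ∈ Finset.range b, (X:Polynomial ℤ) ^ k)).coeff (a + b - 2) = 1 := by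
    rw [coeff_mul]
    rw [Finset.sum_eq_single (a - 1, b - 1)]
    · simp only [coeff_geom]
      rw [if_pos (by omega), if_pos (by omega)]; norm_num
    · rintro ⟨j, k⟩ hjk hne
      rw [Finset.HasAntidiagonal.mem_antidiagonal] at hjk
      rcases Nat.lt_or_ge j a with hja | hja
      · rcases Nat.lt_or_ge k b with hkb | hkb
        · exact absurd (by simp only [Prod.mk.injEq]; omega) hne
        · rw [coeff_geom, coeff_geom, if_neg (show ¬ k < b by omega), mul_zero]
      · rw [coeff_geom, if_neg (show ¬ j < a by omega), zero_mul]
    · intro h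
      exfalso; apply h
      rw [Finset.HasAntidiagonal.mem_antidiagonal]; omega
  have hX : (X * ((∑ j ∈ Finset.range a, (X:Polynomial ℤ) ^ j) *
      (∑ k ∈ Finset.range b, (X:Polynomial ℤ) ^ k))).coeff (a + b - 1) = 1 := by
    rw [show a + b - 1 = (a + b - 2) + 1 by omega, coeff_X_mul, key]
  simp only [fpoly, coeff_sub, coeff_add, coeff_X_pow, Polynomial.coeff_one, mul_assoc]
  rw [hX]
  rw [if_neg (by omega), if_neg (by omega), if_neg (by omega)]
  ring

lemma term_eq (c : ℤ) (m : ℤ) (i : ℕ) :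
    T m * (c • (-(T 4 : LaurentPolynomial ℤ)) ^ i) =
      LaurentPolynomial.C ((-1)^i * c) * T (m + 4 * i) := by
  have hc : ∀ x : LaurentPolynomial ℤ, c • x = LaurentPolynomial.C c * x := by
    intro x
    rw [show (LaurentPolynomial.C c : LaurentPolynomial ℤ) = (c : LaurentPolynomial ℤ) from
      eq_intCast _ c, ← zsmul_eq_mul]
  rw [hc, neg_pow (T 4 : LaurentPolynomial ℤ), T_pow,
    show (4:ℤ) * i = (i:ℤ) * 4 from mul_comm _ _, T_add, map_mul, map_pow, map_neg, map_one]
  ring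

lemma coeff_CT (a : ℤ) (e n : ℤ) :
    (LaurentPolynomial.C a * T e : LaurentPolynomial ℤ).coeff n = if e = n then a else 0 := by
  rw [← single_eq_C_mul_T]
  exact Finsupp.single_apply

/-- For `p, q > 1`, `⟨K(p,q)⟩ ≠ 0`, its maximal exponent is `3(p+q) - 4`, its
minimal exponent is `-(p+q)`, so the difference of the extreme exponents is
`4(p+q) - 4` (i.e. the span of the Jones polynomial of `K(p,q)` is `p+q`). -/
theorem bracket_span (p q : ℤ) (hp : 1 < p) (hq : 1 < q) :
    ∃ h : B p q ≠ 0,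
      (B p q).coeff.support.max' (Finsupp.support_nonempty_iff.mpr (AddMonoidAlgebra.coeff_eq_zero.not.mpr h)) = 3 * (p + q) - 4 ∧
      (B p q).coeff.support.min' (Finsupp.support_nonempty_iff.mpr (AddMonoidAlgebra.coeff_eq_zero.not.mpr h)) = -(p + q) ∧
      (B p q).coeff.support.max' (Finsupp.support_nonempty_iff.mpr (AddMonoidAlgebra.coeff_eq_zero.not.mpr h)) -
        (B p q).coeff.support.min' (Finsupp.support_nonempty_iff.mpr (AddMonoidAlgebra.coeff_eq_zero.not.mpr h)) = 4 * (p + q) - 4 := by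
  set a := p.toNat with hadef
  set b := q.toNat with hbdef
  have ha : ((a:ℤ)) = p := Int.toNat_of_nonneg (by omega)
  have hb : ((b:ℤ)) = q := Int.toNat_of_nonneg (by omega)
  have ha2 : 2 ≤ a := by omega
  have hb2 : 2 ≤ b := by omega
  have hdeg := natDegree_f_lt a b ha2 hb2
  have hBsum : B p q = ∑ i ∈ Finset.range (a+b),
      LaurentPolynomial.C ((-1)^i * (fpoly a b).coeff i) * T ((-p - q) + 4 * i) := by
    rw [B_eq p q (by omega) (by omega), aeval_eq_sum_range' hdeg, Finset.mul_sum]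
    exact Finset.sum_congr rfl fun i _ => term_eq _ _ _
  have hcoeff : ∀ n : ℤ, (B p q).coeff n = ∑ i ∈ Finset.range (a+b),
      if (-p - q) + 4 * (i:ℤ) = n then (-1)^i * (fpoly a b).coeff i else 0 := by
    intro n
    rw [hBsum, AddMonoidAlgebra.coeff_sum, Finsupp.finset_sum_apply]
    exact Finset.sum_congr rfl fun i _ => coeff_CT _ _ _
  have hlow : (B p q).coeff (-(p+q)) = -1 := by
    rw [hcoeff]
    rw [Finset.sum_eq_single 0]
    · rw [if_pos (by push_cast; ring)]
      norm_num [coeff_f_zero a b ha2 hb2]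
    · intro i hi hne
      simp only [Finset.mem_range] at hi
      rw [if_neg (show ¬(-p - q + 4 * (i:ℤ) = -(p+q)) by omega)]
    · intro h
      exact absurd (Finset.mem_range.mpr (by omega)) h
  have htop : (B p q).coeff (3*(p+q)-4) ≠ 0 := by
    have : (B p q).coeff (3*(p+q)-4) = (-1)^(a+b-1) * (-1) := by
      rw [hcoeff]
      rw [Finset.sum_eq_single (a+b-1)]
      · rw [if_pos (by omega), coeff_f_top a b ha2 hb2]
      · intro i hi hne
        simp only [Finset.mem_range] at hi
        rw [if_neg (show ¬(-p - q + 4 * (i:ℤ) = 3*(p+q)-4) by omega)]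
      · intro h
        exact absurd (Finset.mem_range.mpr (by omega)) h
    rw [this]
    exact mul_ne_zero (pow_ne_zero _ (by norm_num)) (by norm_num)
  have hne : B p q ≠ 0 := by
    intro h
    rw [h] at hlow
    simp at hlow
  have hmemlow : -(p+q) ∈ (B p q).coeff.support :=
    Finsupp.mem_support_iff.mpr (by rw [hlow]; norm_num)
  have hmemtop : (3*(p+q)-4) ∈ (B p q).coeff.support := Finsupp.mem_support_iff.mpr htop
  have hbound : ∀ n ∈ (B p q).coeff.support, -(p+q) ≤ n ∧ n ≤ 3*(p+q) - 4 := by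
    intro n hn
    rw [Finsupp.mem_support_iff, hcoeff] at hn
    obtain ⟨i, hi, hterm⟩ := Finset.exists_ne_zero_of_sum_ne_zero hn
    simp only [Finset.mem_range] at hi
    by_cases h' : (-p - q) + 4 * (i:ℤ) = n
    · constructor <;> omega
    · rw [if_neg h'] at hterm
      exact absurd rfl hterm
  have hmax : (B p q).coeff.support.max' (Finsupp.support_nonempty_iff.mpr (AddMonoidAlgebra.coeff_eq_zero.not.mpr hne)) = 3*(p+q)-4 :=
    le_antisymm (Finset.max'_le _ _ _ fun n hn => (hbound n hn).2)
      (Finset.le_max' _ _ hmemtop)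
  have hmin : (B p q).coeff.support.min' (Finsupp.support_nonempty_iff.mpr (AddMonoidAlgebra.coeff_eq_zero.not.mpr hne)) = -(p+q) :=
    le_antisymm (Finset.min'_le _ _ hmemlow)
      (Finset.le_min' _ _ _ fun n hn => (hbound n hn).1)
  exact ⟨hne, hmax, hmin, by rw [hmax, hmin]; ring⟩
end
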